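/- arXiv:2402.01324 — 7 statements merged into one kernel-verified Lean document; each statement's English description precedes it below -/
import Mathlib

section
/- If the cubic Hermite interpolant P on [x_i, x_{i+1}] of data (x_i, f_i, ḟ_i), (x_{i+1}, f_{i+1}, ḟ_{i+1}) is monotone (non-decreasing or non-increasing) on [x_i, x_{i+1}], then sign(ḟ_i) = sign(ḟ_{i+1}) = sign(m_i), in the sense that ḟ_i · m_i ≥ 0 and ḟ_{i+1} · m_i ≥ 0 and both ḟ_i and ḟ_{i+1} have the same sign as m_i whenever they are nonzero. -/
/-!
A function that is monotone on `[a, b]` has, at every point of `[a, b]` where it is differentiable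
within `[a, b]`, a derivative of the same weak sign as its slope `(f b - f a) / (b - a)`. The
derivative can only be nonzero if the slope is: a monotone function with `f a = f b` is constant on
`[a, b]`, hence antitone as well, so its derivative is both `≥ 0` and `≤ 0`. The cubic Hermite
interpolant has derivatives `ḟ_i`, `ḟ_{i+1}` at the endpoints and slope `m_i` between them.
-/

open Set Filter

section SignOfDerivative

variable {f : ℝ → ℝ} {a b x d : ℝ}

lemma MonotoneOn.antitoneOn_Icc_of_eq (hf : MonotoneOn f (Icc a b)) (hfab : f a = f b) :
    AntitoneOn f (Icc a b) := fun y hy z hz _ =>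
  have hab : a ≤ b := hy.1.trans hy.2
  calc f z ≤ f b := hf hz (right_mem_Icc.2 hab) hz.2
    _ = f a := hfab.symm
    _ ≤ f y := hf (left_mem_Icc.2 hab) hy hy.1

lemma HasDerivWithinAt.sign_eq_sign_slope_of_monotoneOn (hab : a < b) (hx : x ∈ Icc a b)
    (hd : HasDerivWithinAt f d (Icc a b) x) (hf : MonotoneOn f (Icc a b)) :
    0 ≤ d * slope f a b ∧ (d ≠ 0 → Real.sign d = Real.sign (slope f a b)) := by
  have hacc : AccPt x (𝓟 (Icc a b)) := (uniqueDiffOn_Icc hab x hx).accPt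
  have hd_nonneg : 0 ≤ d := hd.nonneg_of_monotoneOn hacc hf
  have hslope_nonneg : 0 ≤ slope f a b :=
    hf.slope_nonneg (left_mem_Icc.2 hab.le) (right_mem_Icc.2 hab.le)
  refine ⟨mul_nonneg hd_nonneg hslope_nonneg, fun hd_ne => ?_⟩
  have hslope_pos : 0 < slope f a b := by
    refine hslope_nonneg.lt_of_ne' fun hslope => hd_ne (le_antisymm ?_ hd_nonneg)
    exact hd.nonpos_of_antitoneOn hacc (hf.antitoneOn_Icc_of_eq (slope_eq_zero_iff.1 hslope))
  rw [Real.sign_of_pos (hd_nonneg.lt_of_ne' hd_ne), Real.sign_of_pos hslope_pos]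

lemma HasDerivWithinAt.sign_eq_sign_slope (hab : a < b) (hx : x ∈ Icc a b)
    (hd : HasDerivWithinAt f d (Icc a b) x)
    (hf : MonotoneOn f (Icc a b) ∨ AntitoneOn f (Icc a b)) :
    0 ≤ d * slope f a b ∧ (d ≠ 0 → Real.sign d = Real.sign (slope f a b)) := by
  rcases hf with hf | hf
  · exact hd.sign_eq_sign_slope_of_monotoneOn hab hx hf
  · obtain ⟨hprod, hsign⟩ := hd.neg.sign_eq_sign_slope_of_monotoneOn hab hx hf.neg
    simp only [slope_neg_fun, Pi.neg_apply, neg_mul_neg, ne_eq, neg_eq_zero, Real.sign_neg,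
      neg_inj] at hprod hsign
    exact ⟨hprod, hsign⟩

end SignOfDerivative

section HermiteCubic

/-- The interpolant `P` of the statement, with `h = x₁ - x₀` substituted. -/
noncomputable def hermiteCubic (x₀ x₁ f₀ d₀ d₁ m x : ℝ) : ℝ :=
  f₀ + d₀ * (x - x₀) + ((m - d₀) / (x₁ - x₀)) * (x - x₀) ^ 2
    + ((d₁ + d₀ - 2 * m) / (x₁ - x₀) ^ 2) * (x - x₀) ^ 2 * (x - x₁)

variable {x₀ x₁ : ℝ} (f₀ d₀ d₁ m : ℝ)

lemma hasDerivAt_hermiteCubic (x : ℝ) :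
    HasDerivAt (hermiteCubic x₀ x₁ f₀ d₀ d₁ m)
      (d₀ + 2 * ((m - d₀) / (x₁ - x₀)) * (x - x₀)
        + ((d₁ + d₀ - 2 * m) / (x₁ - x₀) ^ 2) * (2 * (x - x₀) * (x - x₁) + (x - x₀) ^ 2))
      x := by
  have hlin : HasDerivAt (fun x : ℝ => x - x₀) 1 x := (hasDerivAt_id' x).sub_const x₀
  have hsq : HasDerivAt (fun x : ℝ => (x - x₀) ^ 2) (2 * (x - x₀)) x := by
    simpa using hlin.fun_pow 2
  have hcube := (hsq.const_mul ((d₁ + d₀ - 2 * m) / (x₁ - x₀) ^ 2)).fun_mul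
    ((hasDerivAt_id' x).sub_const x₁)
  have := (((hlin.const_mul d₀).const_add f₀).fun_add
    (hsq.const_mul ((m - d₀) / (x₁ - x₀)))).fun_add hcube
  exact this.congr_deriv (by ring)

lemma hasDerivAt_hermiteCubic_left :
    HasDerivAt (hermiteCubic x₀ x₁ f₀ d₀ d₁ m) d₀ x₀ :=
  (hasDerivAt_hermiteCubic f₀ d₀ d₁ m x₀).congr_deriv (by ring)

lemma hasDerivAt_hermiteCubic_right (hne : x₀ ≠ x₁) :
    HasDerivAt (hermiteCubic x₀ x₁ f₀ d₀ d₁ m) d₁ x₁ := by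
  have hh : x₁ - x₀ ≠ 0 := sub_ne_zero.2 hne.symm
  refine (hasDerivAt_hermiteCubic f₀ d₀ d₁ m x₁).congr_deriv ?_
  field_simp
  ring

lemma slope_hermiteCubic (hne : x₀ ≠ x₁) :
    slope (hermiteCubic x₀ x₁ f₀ d₀ d₁ m) x₀ x₁ = m := by
  have hh : x₁ - x₀ ≠ 0 := sub_ne_zero.2 hne.symm
  rw [slope_def_field, hermiteCubic, hermiteCubic]
  field_simp
  ring

end HermiteCubic

theorem fritsch_carlson_necessary_general
    (xi xip fi dfi dfip h m : ℝ)
    (hx : xi < xip)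
    (hh : h = xip - xi)
    (P : ℝ → ℝ)
    (hP : ∀ x, P x = fi + dfi * (x - xi) + ((m - dfi) / h) * (x - xi) ^ 2
        + ((dfip + dfi - 2 * m) / h ^ 2) * (x - xi) ^ 2 * (x - xip))
    (hmono : MonotoneOn P (Set.Icc xi xip) ∨ AntitoneOn P (Set.Icc xi xip)) :
    dfi * m ≥ 0 ∧ dfip * m ≥ 0 ∧
      (dfi ≠ 0 → Real.sign dfi = Real.sign m) ∧
      (dfip ≠ 0 → Real.sign dfip = Real.sign m) := by
  subst hh
  obtain rfl : P = hermiteCubic xi xip fi dfi dfip m := funext hP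
  obtain ⟨hprod₀, hsign₀⟩ := (hasDerivAt_hermiteCubic_left fi dfi dfip m)
    |>.hasDerivWithinAt.sign_eq_sign_slope hx (left_mem_Icc.2 hx.le) hmono
  obtain ⟨hprod₁, hsign₁⟩ := (hasDerivAt_hermiteCubic_right fi dfi dfip m hx.ne)
    |>.hasDerivWithinAt.sign_eq_sign_slope hx (right_mem_Icc.2 hx.le) hmono
  rw [slope_hermiteCubic _ _ _ _ hx.ne] at hprod₀ hsign₀ hprod₁ hsign₁
  exact ⟨hprod₀, hprod₁, hsign₀, hsign₁⟩

/-- Fritsch–Carlson necessary condition for monotonicity of a cubic Hermite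
interpolant: the derivative data must have the same sign as the slope. -/
theorem fritsch_carlson_necessary
    (xi xip fi fip dfi dfip h m : ℝ)
    (hx : xi < xip)
    (hh : h = xip - xi)
    (hm : m = (fip - fi) / h)
    (P : ℝ → ℝ)
    (hP : ∀ x, P x = fi + dfi * (x - xi) + ((m - dfi) / h) * (x - xi) ^ 2
        + ((dfip + dfi - 2 * m) / h ^ 2) * (x - xi) ^ 2 * (x - xip))
    (hmono : MonotoneOn P (Set.Icc xi xip) ∨ AntitoneOn P (Set.Icc xi xip)) :
    dfi * m ≥ 0 ∧ dfip * m ≥ 0 ∧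
      (dfi ≠ 0 → Real.sign dfi = Real.sign m) ∧
      (dfip ≠ 0 → Real.sign dfip = Real.sign m) :=
  fritsch_carlson_necessary_general xi xip fi dfi dfip h m hx hh P hP hmono
end

section
/- If m_i = 0, then the cubic Hermite interpolant P on [x_i, x_{i+1}] is monotone (hence constant) if and only if ḟ_i = ḟ_{i+1} = 0. -/
/-!
With zero slope, the Hermite cubic takes the same value `f_i` at both nodes and factors as
`P x = f_i + (x - x_i) (x_{i+1} - x) (ḟ_i (x_{i+1} - x) - ḟ_{i+1} (x - x_i)) / h²`.
A monotone function with equal values at the ends of an interval is constant on it, so the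
linear factor vanishes on the open interval, which forces `ḟ_i = ḟ_{i+1} = 0`.
-/

open Set

theorem MonotoneOn.eq_left_of_eq {α β : Type*} [Preorder α] [PartialOrder β] {f : α → β}
    {a b x : α} (hf : MonotoneOn f (Icc a b)) (hab : f a = f b) (hx : x ∈ Icc a b) :
    f x = f a :=
  have ha : a ∈ Icc a b := ⟨le_rfl, hx.1.trans hx.2⟩
  have hb : b ∈ Icc a b := ⟨hx.1.trans hx.2, le_rfl⟩
  le_antisymm (hab ▸ hf hx hb hx.2) (hf ha hx hx.1)

theorem AntitoneOn.eq_left_of_eq {α β : Type*} [Preorder α] [PartialOrder β] {f : α → β}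
    {a b x : α} (hf : AntitoneOn f (Icc a b)) (hab : f a = f b) (hx : x ∈ Icc a b) :
    f x = f a :=
  MonotoneOn.eq_left_of_eq (β := βᵒᵈ) hf hab hx

theorem hermite_zero_slope_eq (xi xip fi dfi dfip h x : ℝ) (hh : h = xip - xi) (hh0 : h ≠ 0) :
    fi + dfi * (x - xi) + ((0 - dfi) / h) * (x - xi) ^ 2
        + ((dfip + dfi - 2 * 0) / h ^ 2) * (x - xi) ^ 2 * (x - xip) =
      fi + (x - xi) * (xip - x) * (dfi * (xip - x) - dfip * (x - xi)) / h ^ 2 := by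
  subst hh
  field_simp
  ring

theorem eq_zero_of_forall_mem_Ioo_mul_sub_eq_zero {a b c d : ℝ} (hab : a < b)
    (H : ∀ x ∈ Ioo a b, (x - a) * (b - x) * (c * (b - x) - d * (x - a)) = 0) :
    c = 0 ∧ d = 0 := by
  have hba : (b - a) ^ 3 ≠ 0 := pow_ne_zero 3 (sub_ne_zero.mpr hab.ne')
  have h₁ := H ((2 * a + b) / 3) ⟨by linarith, by linarith⟩
  have h₂ := H ((a + 2 * b) / 3) ⟨by linarith, by linarith⟩
  have e₁ : (b - a) ^ 3 * (2 * c - d) = 0 := by linear_combination (27 / 2) * h₁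
  have e₂ : (b - a) ^ 3 * (c - 2 * d) = 0 := by linear_combination (27 / 2) * h₂
  have := (mul_eq_zero.mp e₁).resolve_left hba
  have := (mul_eq_zero.mp e₂).resolve_left hba
  constructor <;> linarith

theorem fritsch_carlson_zero_slope_general
    (xi xip fi dfi dfip h m : ℝ)
    (hx : xi < xip)
    (hh : h = xip - xi)
    (hm0 : m = 0)
    (P : ℝ → ℝ)
    (hP : ∀ x, P x = fi + dfi * (x - xi) + ((m - dfi) / h) * (x - xi) ^ 2
        + ((dfip + dfi - 2 * m) / h ^ 2) * (x - xi) ^ 2 * (x - xip)) :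
    (MonotoneOn P (Set.Icc xi xip) ∨ AntitoneOn P (Set.Icc xi xip)) ↔
      (dfi = 0 ∧ dfip = 0) := by
  have hh0 : h ≠ 0 := by rw [hh]; exact sub_ne_zero.mpr hx.ne'
  have hP' : ∀ x, P x = fi + (x - xi) * (xip - x) * (dfi * (xip - x) - dfip * (x - xi)) / h ^ 2 :=
    fun x => by rw [hP, hm0, hermite_zero_slope_eq xi xip fi dfi dfip h x hh hh0]
  have hends : P xi = P xip := by simp [hP']
  constructor
  · intro hmono
    refine eq_zero_of_forall_mem_Ioo_mul_sub_eq_zero hx fun x hx' => ?_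
    have hconst : P x = P xi := hmono.elim (·.eq_left_of_eq hends (Ioo_subset_Icc_self hx'))
      (·.eq_left_of_eq hends (Ioo_subset_Icc_self hx'))
    simpa [hP', hh0] using hconst
  · rintro ⟨rfl, rfl⟩
    exact Or.inl fun a _ b _ _ => by simp [hP']

/-- If the slope `m_i` vanishes, then the cubic Hermite interpolant is monotone
(hence constant) iff both derivative data vanish. -/
theorem fritsch_carlson_zero_slope
    (xi xip fi fip dfi dfip h m : ℝ)
    (hx : xi < xip)
    (hh : h = xip - xi)
    (hm : m = (fip - fi) / h)
    (hm0 : m = 0)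
    (P : ℝ → ℝ)
    (hP : ∀ x, P x = fi + dfi * (x - xi) + ((m - dfi) / h) * (x - xi) ^ 2
        + ((dfip + dfi - 2 * m) / h ^ 2) * (x - xi) ^ 2 * (x - xip)) :
    (MonotoneOn P (Set.Icc xi xip) ∨ AntitoneOn P (Set.Icc xi xip)) ↔
      (dfi = 0 ∧ dfip = 0) :=
  fritsch_carlson_zero_slope_general xi xip fi dfi dfip h m hx hh hm0 P hP
end

section
/- Using Kershaw's bound on A⁻¹, the interior derivative values of two cubic splines interpolating the same data but with different endpoint derivative values ḟ_1, ḟ_n versus ḟ̃_1, ḟ̃_n satisfy |ḟ_i − f̃_i| ≤ (2/3)(2^{−(i−2)} λ_1 |ḟ̃_1 − ḟ_1| + 2^{−(n−1−i)} μ_{n−2} |ḟ̃_n − ḟ_n|) for 2 ≤ i ≤ n−1. -/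
/-- Bound on the difference of interior derivative values of two cubic splines that
differ only in the endpoint derivative data: for `2 ≤ i ≤ n-1` (here the interior node
`i` corresponds to the coordinate of index `i - 2` in the solution vector),
`|ḟ_i - f̃_i| ≤ (2/3)(2^{-(i-2)} λ_1 |ḟ̃_1 - ḟ_1| + 2^{-(n-1-i)} μ_{n-2} |ḟ̃_n - ḟ_n|)`. -/
theorem spline_derivative_difference_bound
    (n : ℕ) (hn : 4 ≤ n)
    (lam mu : ℕ → ℝ)
    (hlam : ∀ i, 1 ≤ i → i ≤ n - 2 → 0 ≤ lam i ∧ lam i ≤ 1)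
    (hmu : ∀ i, 1 ≤ i → i ≤ n - 2 → 0 ≤ mu i ∧ mu i ≤ 1)
    (hsum : ∀ i, 1 ≤ i → i ≤ n - 2 → lam i + mu i = 1)
    (A : Matrix (Fin (n - 2)) (Fin (n - 2)) ℝ)
    (hA : ∀ i j : Fin (n - 2), A i j =
      if (i : ℕ) = (j : ℕ) then 2
      else if (j : ℕ) = (i : ℕ) + 1 then mu ((i : ℕ) + 1)
      else if (i : ℕ) = (j : ℕ) + 1 then lam ((i : ℕ) + 1)
      else 0)
    (hInv : IsUnit A.det)
    (hKershaw : ∀ i j : Fin (n - 2),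
      0 < (-1 : ℝ) ^ ((i : ℤ) - (j : ℤ)) * A⁻¹ i j ∧
      (-1 : ℝ) ^ ((i : ℤ) - (j : ℤ)) * A⁻¹ i j ≤ (2 / 3) * 2 ^ (-|(i : ℤ) - (j : ℤ)|))
    (fst lst : Fin (n - 2)) (hfst : (fst : ℕ) = 0) (hlst : (lst : ℕ) = n - 3)
    (df1 dfn dft1 dftn : ℝ)
    (b bt F Ft : Fin (n - 2) → ℝ)
    (hF : A.mulVec F = b)
    (hFt : A.mulVec Ft = bt)
    (hfirst : b fst - bt fst = lam 1 * (dft1 - df1))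
    (hlast : b lst - bt lst = mu (n - 2) * (dftn - dfn))
    (hmid : ∀ j : Fin (n - 2), j ≠ fst → j ≠ lst → b j = bt j) :
    ∀ i : Fin (n - 2),
      |F i - Ft i| ≤ (2 / 3) *
        (2 ^ (-(i : ℤ)) * lam 1 * |dft1 - df1|
          + 2 ^ (-((n : ℤ) - 3 - (i : ℤ))) * mu (n - 2) * |dftn - dfn|) := by
  intro i
  -- basic facts
  have hlam1 : 0 ≤ lam 1 := (hlam 1 le_rfl (by omega)).1
  have hmun : 0 ≤ mu (n - 2) := (hmu (n - 2) (by omega) le_rfl).1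
  have hne : fst ≠ lst := by
    intro h
    have : (fst : ℕ) = (lst : ℕ) := by rw [h]
    omega
  -- F - Ft = A⁻¹ (b - bt)
  have hsub : A.mulVec (F - Ft) = b - bt := by
    rw [Matrix.mulVec_sub, hF, hFt]
  have hFFt : F - Ft = A⁻¹.mulVec (b - bt) := by
    rw [← hsub, Matrix.mulVec_mulVec, Matrix.nonsing_inv_mul A hInv, Matrix.one_mulVec]
  have hcoord : F i - Ft i =
      A⁻¹ i fst * (b fst - bt fst) + A⁻¹ i lst * (b lst - bt lst) := by
    have h1 : F i - Ft i = ∑ j, A⁻¹ i j * (b j - bt j) := by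
      have := congrFun hFFt i
      simpa [Matrix.mulVec, dotProduct, Pi.sub_apply] using this
    rw [h1, ← Finset.add_sum_erase _ _ (Finset.mem_univ fst)]
    congr 1
    rw [Finset.sum_eq_single_of_mem lst
      (Finset.mem_erase.2 ⟨hne.symm, Finset.mem_univ _⟩)]
    intro k hk hklst
    rw [hmid k (Finset.mem_erase.1 hk).1 hklst]
    ring
  -- abs bound on A⁻¹ entries
  have habs : ∀ j : Fin (n - 2), |A⁻¹ i j| ≤ (2 / 3) * 2 ^ (-|(i : ℤ) - (j : ℤ)|) := by
    intro j
    obtain ⟨h1, h2⟩ := hKershaw i j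
    have hc : |((-1 : ℝ) ^ ((i : ℤ) - (j : ℤ)))| = 1 := by
      rcases Int.even_or_odd ((i : ℤ) - (j : ℤ)) with he | ho
      · rw [he.neg_one_zpow]; simp
      · rw [ho.neg_one_zpow]; simp
    calc |A⁻¹ i j| = |(-1 : ℝ) ^ ((i : ℤ) - (j : ℤ)) * A⁻¹ i j| := by
          rw [abs_mul, hc, one_mul]
      _ = (-1 : ℝ) ^ ((i : ℤ) - (j : ℤ)) * A⁻¹ i j := abs_of_pos h1
      _ ≤ (2 / 3) * 2 ^ (-|(i : ℤ) - (j : ℤ)|) := h2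
  -- exponents
  have hfstZ : ((fst : ℕ) : ℤ) = 0 := by rw [hfst]; simp
  have hlstZ : ((lst : ℕ) : ℤ) = (n : ℤ) - 3 := by rw [hlst]; omega
  have hiLt : (i : ℕ) < n - 2 := i.isLt
  have hiZ : (i : ℤ) ≤ (n : ℤ) - 3 := by omega
  have e1 : |(i : ℤ) - ((fst : ℕ) : ℤ)| = (i : ℤ) := by
    rw [hfstZ]; simp [abs_of_nonneg]
  have e2 : |(i : ℤ) - ((lst : ℕ) : ℤ)| = (n : ℤ) - 3 - (i : ℤ) := by
    rw [hlstZ, abs_sub_comm, abs_of_nonneg (by omega)]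
  have b1 : |A⁻¹ i fst| ≤ (2 / 3) * 2 ^ (-(i : ℤ)) := by
    have := habs fst; rwa [e1] at this
  have b2 : |A⁻¹ i lst| ≤ (2 / 3) * 2 ^ (-((n : ℤ) - 3 - (i : ℤ))) := by
    have := habs lst; rwa [e2] at this
  -- put it together
  rw [hcoord, hfirst, hlast]
  have hpow1 : (0 : ℝ) ≤ 2 ^ (-(i : ℤ)) := by positivity
  have hpow2 : (0 : ℝ) ≤ 2 ^ (-((n : ℤ) - 3 - (i : ℤ))) := by positivity
  calc |A⁻¹ i fst * (lam 1 * (dft1 - df1)) + A⁻¹ i lst * (mu (n - 2) * (dftn - dfn))|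
      ≤ |A⁻¹ i fst * (lam 1 * (dft1 - df1))| + |A⁻¹ i lst * (mu (n - 2) * (dftn - dfn))| :=
        abs_add_le _ _
    _ = |A⁻¹ i fst| * (lam 1 * |dft1 - df1|) + |A⁻¹ i lst| * (mu (n - 2) * |dftn - dfn|) := by
        rw [abs_mul, abs_mul, abs_mul, abs_mul, abs_of_nonneg hlam1, abs_of_nonneg hmun]
    _ ≤ ((2 / 3) * 2 ^ (-(i : ℤ))) * (lam 1 * |dft1 - df1|)
        + ((2 / 3) * 2 ^ (-((n : ℤ) - 3 - (i : ℤ)))) * (mu (n - 2) * |dftn - dfn|) := by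
        gcongr <;> positivity
    _ = (2 / 3) * (2 ^ (-(i : ℤ)) * lam 1 * |dft1 - df1|
          + 2 ^ (-((n : ℤ) - 3 - (i : ℤ))) * mu (n - 2) * |dftn - dfn|) := by ring
end

section
/- Let P and P̃ be cubic splines interpolating the same nodes and values {(x_i, f_i)} but with endpoint derivative data ḟ_1, ḟ_n and ḟ̃_1, ḟ̃_n respectively (interior derivatives computed from the tridiagonal spline system). Then for 2 ≤ i ≤ n−2 and all x ∈ [x_i, x_{i+1}], |P_i(x) − P̃_i(x)| ≤ 8 h_i (2^{−i} λ_1 |ḟ̃_1 − ḟ_1| + 2^{i−n} μ_{n−2} |ḟ̃_n − ḟ_n|). -/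
/-!
The differences `e j = dtF j - dF j` of the derivative values solve the homogeneous tridiagonal
system `λ e (j-1) + 2 e j + μ e (j+1) = 0` with `λ, μ ≥ 0`, `λ + μ = 1`, so
`2 |e j| ≤ λ |e (j-1)| + μ |e (j+1)|`. The two-sided profile
`φ k = (8/3) (2^(-k) λ₁ |e 1| + 2^(k-n) μ_{n-2} |e n|)` satisfies the reverse inequality, and at the
two ends of the system it absorbs the boundary terms `λ₁ |e 1|` and `μ_{n-2} |e n|`; a discrete
maximum principle then gives `|e j| ≤ φ j`, in place of Kershaw's bound on the inverse matrix.
Finally the two spline pieces differ by `e i`, `e (i+1)` times the Hermite basis functions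
`s t² / h²` and `s² t / h²` (`s = y - x i`, `t = x (i+1) - y`), each of which is at most `h / 4`.
-/

open Finset

theorem nonpos_of_two_mul_le_weighted_neighbours {p q : ℕ} {v α β : ℕ → ℝ} (hpq : p < q)
    (hα : ∀ j, p ≤ j → j ≤ q → 0 ≤ α j) (hβ : ∀ j, p ≤ j → j ≤ q → 0 ≤ β j)
    (hαβ : ∀ j, p ≤ j → j ≤ q → α j + β j ≤ 1)
    (hp : 2 * v p ≤ β p * v (p + 1)) (hq : 2 * v q ≤ α q * v (q - 1))
    (hint : ∀ j, p < j → j < q → 2 * v j ≤ α j * v (j - 1) + β j * v (j + 1)) :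
    ∀ j, p ≤ j → j ≤ q → v j ≤ 0 := by
  obtain ⟨j₀, hj₀, hmax⟩ := (Icc p q).exists_max_image v ⟨p, by simp [hpq.le]⟩
  simp only [mem_Icc] at hj₀ hmax
  suffices v j₀ ≤ 0 from fun j hpj hjq => (hmax j ⟨hpj, hjq⟩).trans this
  by_contra! hpos
  have hα₀ := hα j₀ hj₀.1 hj₀.2
  have hβ₀ := hβ j₀ hj₀.1 hj₀.2
  have hαβ₀ := hαβ j₀ hj₀.1 hj₀.2
  rcases hj₀.1.eq_or_lt with hpj | hpj
  · rw [hpj] at hp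
    have := mul_le_mul_of_nonneg_left (hmax (j₀ + 1) ⟨by omega, by omega⟩) hβ₀
    nlinarith
  rcases hj₀.2.eq_or_lt with hjq | hjq
  · rw [← hjq] at hq
    have := mul_le_mul_of_nonneg_left (hmax (j₀ - 1) ⟨by omega, by omega⟩) hα₀
    nlinarith
  have hleft := mul_le_mul_of_nonneg_left (hmax (j₀ - 1) ⟨by omega, by omega⟩) hα₀
  have hright := mul_le_mul_of_nonneg_left (hmax (j₀ + 1) ⟨by omega, by omega⟩) hβ₀
  nlinarith [hint j₀ hpj hjq]

theorem two_mul_abs_le_of_tridiag_eq_zero {l μ u v w : ℝ} (hl : 0 ≤ l) (hμ : 0 ≤ μ)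
    (h : l * u + 2 * v + μ * w = 0) : 2 * |v| ≤ l * |u| + μ * |w| :=
  calc 2 * |v| = |l * u + μ * w| := by
        rw [show l * u + μ * w = -(2 * v) by linarith, abs_neg, abs_mul, abs_two]
    _ ≤ |l * u| + |μ * w| := abs_add_le _ _
    _ = l * |u| + μ * |w| := by rw [abs_mul, abs_mul, abs_of_nonneg hl, abs_of_nonneg hμ]

noncomputable def decayProfile (a b : ℝ) (k : ℤ) : ℝ := a * 2 ^ (-k) + b * 2 ^ k

section decayProfile

variable {a b : ℝ}

theorem decayProfile_nonneg (ha : 0 ≤ a) (hb : 0 ≤ b) (k : ℤ) : 0 ≤ decayProfile a b k := by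
  unfold decayProfile; positivity

theorem decayProfile_add_one (k : ℤ) :
    decayProfile a b (k + 1) = a * 2 ^ (-k) / 2 + 2 * (b * 2 ^ k) := by
  simp only [decayProfile]
  rw [neg_add, zpow_add₀ two_ne_zero, zpow_add₀ two_ne_zero]
  norm_num
  ring

theorem decayProfile_sub_one (k : ℤ) :
    decayProfile a b (k - 1) = 2 * (a * 2 ^ (-k)) + b * 2 ^ k / 2 := by
  simp only [decayProfile]
  rw [show -(k - 1) = -k + 1 by ring, sub_eq_add_neg, zpow_add₀ two_ne_zero,
    zpow_add₀ two_ne_zero]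
  norm_num
  ring

theorem two_mul_decayProfile_eq_add_one (k : ℤ) :
    2 * decayProfile a b k = decayProfile a b (k + 1) + 3 / 2 * (a * 2 ^ (-k)) := by
  rw [decayProfile_add_one, decayProfile]; ring

theorem two_mul_decayProfile_eq_sub_one (k : ℤ) :
    2 * decayProfile a b k = decayProfile a b (k - 1) + 3 / 2 * (b * 2 ^ k) := by
  rw [decayProfile_sub_one, decayProfile]; ring

theorem decayProfile_add_decayProfile_add_one (k : ℤ) :
    decayProfile a b k + decayProfile a b (k + 1) = 3 / 2 * (a * 2 ^ (-k)) + 3 * (b * 2 ^ k) := by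
  rw [decayProfile_add_one, decayProfile]; ring

theorem weighted_decayProfile_neighbours_le (ha : 0 ≤ a) (hb : 0 ≤ b) {l μ : ℝ} (hl : 0 ≤ l)
    (hμ : 0 ≤ μ) (hlμ : l + μ ≤ 1) (k : ℤ) :
    l * decayProfile a b (k - 1) + μ * decayProfile a b (k + 1) ≤ 2 * decayProfile a b k := by
  rw [decayProfile_sub_one, decayProfile_add_one, decayProfile]
  have hA : 0 ≤ a * (2 : ℝ) ^ (-k) := by positivity
  have hB : 0 ≤ b * (2 : ℝ) ^ k := by positivity
  nlinarith [mul_nonneg hl hB, mul_nonneg hμ hA]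

theorem two_mul_decayProfile_two (L : ℝ) :
    2 * decayProfile (8 / 3 * L) b 2 = decayProfile (8 / 3 * L) b 3 + L := by
  have h := two_mul_decayProfile_eq_add_one (a := 8 / 3 * L) (b := b) 2
  norm_num at h
  linarith

theorem two_mul_decayProfile_sub_one_self (R : ℝ) (n : ℤ) :
    2 * decayProfile a (8 / 3 * 2 ^ (-n) * R) (n - 1)
      = decayProfile a (8 / 3 * 2 ^ (-n) * R) (n - 1 - 1) + 2 * R := by
  rw [two_mul_decayProfile_eq_sub_one]
  have h : (2 : ℝ) ^ (-n) * 2 ^ (n - 1) = 1 / 2 := by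
    rw [← zpow_add₀ two_ne_zero, show -n + (n - 1) = -1 by ring]; norm_num
  linear_combination 4 * R * h

end decayProfile

theorem abs_le_decayProfile_of_tridiag {n : ℕ} (hn : 4 ≤ n) {lam mu e : ℕ → ℝ}
    (hlm : ∀ j, 1 ≤ j → j ≤ n - 2 → 0 ≤ lam j ∧ 0 ≤ mu j ∧ lam j + mu j ≤ 1)
    (heq : ∀ k, 2 ≤ k → k ≤ n - 1 →
      lam (k - 1) * e (k - 1) + 2 * e k + mu (k - 1) * e (k + 1) = 0) :
    ∀ k, 2 ≤ k → k ≤ n - 1 → |e k| ≤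
      decayProfile (8 / 3 * (lam 1 * |e 1|)) (8 / 3 * 2 ^ (-(n : ℤ)) * (mu (n - 2) * |e n|)) k := by
  set L := lam 1 * |e 1|
  set R := mu (n - 2) * |e n|
  set φ := decayProfile (8 / 3 * L) (8 / 3 * 2 ^ (-(n : ℤ)) * R)
  have hL : 0 ≤ L := mul_nonneg (hlm 1 le_rfl (by omega)).1 (abs_nonneg _)
  have hR : 0 ≤ R := mul_nonneg (hlm (n - 2) (by omega) le_rfl).2.1 (abs_nonneg _)
  have hφ : ∀ k, 0 ≤ φ k := decayProfile_nonneg (by positivity) (by positivity)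
  have hsub : ∀ j : ℕ, 1 ≤ j → ((j - 1 : ℕ) : ℤ) = j - 1 := fun j hj => Nat.cast_pred hj
  have hw : ∀ j, 2 ≤ j → j ≤ n - 1 →
      0 ≤ lam (j - 1) ∧ 0 ≤ mu (j - 1) ∧ lam (j - 1) + mu (j - 1) ≤ 1 := fun j h2 hn' =>
    hlm (j - 1) (by omega) (by omega)
  have hbound : ∀ j, 2 ≤ j → j ≤ n - 1 →
      2 * |e j| ≤ lam (j - 1) * |e (j - 1)| + mu (j - 1) * |e (j + 1)| := fun j h2 hn' =>
    two_mul_abs_le_of_tridiag_eq_zero (hw j h2 hn').1 (hw j h2 hn').2.1 (heq j h2 hn')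
  intro k hk2 hkn
  suffices |e k| - φ k ≤ 0 by linarith
  refine nonpos_of_two_mul_le_weighted_neighbours (v := fun j => |e j| - φ j)
    (α := fun j => lam (j - 1)) (β := fun j => mu (j - 1)) (by omega)
    (fun j h1 h2 => (hw j h1 h2).1) (fun j h1 h2 => (hw j h1 h2).2.1)
    (fun j h1 h2 => (hw j h1 h2).2.2) ?_ ?_ ?_ k hk2 hkn
  · have hφ2 : 2 * φ 2 = φ 3 + L := two_mul_decayProfile_two L
    obtain ⟨hlam1, -, hsum1⟩ := hlm 1 le_rfl (by omega)
    have h2 := hbound 2 le_rfl (by omega)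
    norm_num at h2 ⊢
    nlinarith [mul_le_of_le_one_left (hφ 3) (by linarith : mu 1 ≤ 1)]
  · have hφn : 2 * φ (n - 1) = φ (n - 1 - 1) + 2 * R := two_mul_decayProfile_sub_one_self R n
    have hlam := hlm (n - 2) (by omega) le_rfl
    have hbd := hbound (n - 1) (by omega) le_rfl
    have hn2 : n - 1 - 1 = n - 2 := by omega
    have hn1 : n - 1 + 1 = n := by omega
    rw [hsub (n - 1) (by omega), hsub n (by omega), hn2]
    rw [hn2, hn1] at hbd
    nlinarith [hφ (n - 1 - 1)]
  · intro j h2 hn'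
    obtain ⟨hl, hμ, hlμ⟩ := hw j h2.le (by omega)
    have hsup := weighted_decayProfile_neighbours_le (a := 8 / 3 * L)
      (b := 8 / 3 * 2 ^ (-(n : ℤ)) * R) (by positivity) (by positivity) hl hμ hlμ j
    rw [hsub j (by omega), Nat.cast_succ]
    nlinarith [hbound j (by omega) (by omega)]

theorem mul_sq_div_add_sq_le {s t : ℝ} (hs : 0 ≤ s) (ht : 0 ≤ t) (hst : 0 < s + t) :
    s * t ^ 2 / (s + t) ^ 2 ≤ (s + t) / 4 := by
  rw [div_le_iff₀ (by positivity)]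
  -- `(s + t)³ - 4 s t² = t (s - t)² + s (s + t)²`
  nlinarith [mul_nonneg ht (sq_nonneg (s - t)), mul_nonneg hs (sq_nonneg (s + t))]

noncomputable def hermitePiece (xl xr fl m dl dr y : ℝ) : ℝ :=
  fl + dl * (y - xl) + ((m - dl) / (xr - xl)) * (y - xl) ^ 2
    + ((dr + dl - 2 * m) / (xr - xl) ^ 2) * (y - xl) ^ 2 * (y - xr)

section hermitePiece

variable {xl xr fl m dl dr dl' dr' y : ℝ}

theorem hermitePiece_sub_hermitePiece (hx : xl < xr) :
    hermitePiece xl xr fl m dl dr y - hermitePiece xl xr fl m dl' dr' y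
      = (dl - dl') * ((y - xl) * (xr - y) ^ 2 / (xr - xl) ^ 2)
        - (dr - dr') * ((xr - y) * (y - xl) ^ 2 / (xr - xl) ^ 2) := by
  have hne : xr - xl ≠ 0 := by linarith
  unfold hermitePiece
  field_simp
  ring

theorem abs_hermitePiece_sub_le (hx : xl < xr) (hy : y ∈ Set.Icc xl xr) :
    |hermitePiece xl xr fl m dl dr y - hermitePiece xl xr fl m dl' dr' y|
      ≤ (xr - xl) / 4 * (|dl - dl'| + |dr - dr'|) := by
  obtain ⟨hs, ht⟩ : 0 ≤ y - xl ∧ 0 ≤ xr - y := ⟨by linarith [hy.1], by linarith [hy.2]⟩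
  have hst : (y - xl) + (xr - y) = xr - xl := by ring
  have hpos : 0 < (y - xl) + (xr - y) := by linarith
  have hu := mul_sq_div_add_sq_le hs ht hpos
  have hw := mul_sq_div_add_sq_le ht hs (by linarith)
  rw [hst] at hu
  rw [add_comm, hst] at hw
  rw [hermitePiece_sub_hermitePiece hx]
  have hu0 : 0 ≤ (y - xl) * (xr - y) ^ 2 / (xr - xl) ^ 2 := div_nonneg (by positivity) (sq_nonneg _)
  have hw0 : 0 ≤ (xr - y) * (y - xl) ^ 2 / (xr - xl) ^ 2 := div_nonneg (by positivity) (sq_nonneg _)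
  calc _ ≤ |dl - dl'| * ((y - xl) * (xr - y) ^ 2 / (xr - xl) ^ 2)
        + |dr - dr'| * ((xr - y) * (y - xl) ^ 2 / (xr - xl) ^ 2) := by
        refine (abs_sub _ _).trans_eq ?_
        rw [abs_mul, abs_mul, abs_of_nonneg hu0, abs_of_nonneg hw0]
    _ ≤ |dl - dl'| * ((xr - xl) / 4) + |dr - dr'| * ((xr - xl) / 4) := by gcongr
    _ = (xr - xl) / 4 * (|dl - dl'| + |dr - dr'|) := by ring

end hermitePiece

theorem spline_pieces_distance_bound_general
    (n : ℕ)
    (x f h m lam mu dF dtF : ℕ → ℝ)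
    (hx : ∀ i, 1 ≤ i → i < n → x i < x (i + 1))
    (hh : ∀ i, h i = x (i + 1) - x i)
    (hlam : ∀ i, lam i = h (i + 1) / (h i + h (i + 1)))
    (hmu : ∀ i, mu i = h i / (h i + h (i + 1)))
    -- interior derivative values of both splines solve the tridiagonal system
    (hsys : ∀ i, 2 ≤ i → i ≤ n - 1 →
      lam (i - 1) * dF (i - 1) + 2 * dF i + mu (i - 1) * dF (i + 1)
        = 3 * (lam (i - 1) * m (i - 1) + mu (i - 1) * m i))
    (hsyst : ∀ i, 2 ≤ i → i ≤ n - 1 →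
      lam (i - 1) * dtF (i - 1) + 2 * dtF i + mu (i - 1) * dtF (i + 1)
        = 3 * (lam (i - 1) * m (i - 1) + mu (i - 1) * m i))
    -- the pieces of the two splines, in cubic Hermite form
    (P Pt : ℕ → ℝ → ℝ)
    (hP : ∀ i y, P i y = f i + dF i * (y - x i) + ((m i - dF i) / h i) * (y - x i) ^ 2
        + ((dF (i + 1) + dF i - 2 * m i) / (h i) ^ 2) * (y - x i) ^ 2 * (y - x (i + 1)))
    (hPt : ∀ i y, Pt i y = f i + dtF i * (y - x i) + ((m i - dtF i) / h i) * (y - x i) ^ 2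
        + ((dtF (i + 1) + dtF i - 2 * m i) / (h i) ^ 2) * (y - x i) ^ 2 * (y - x (i + 1))) :
    ∀ i, 2 ≤ i → i ≤ n - 2 → ∀ y ∈ Set.Icc (x i) (x (i + 1)),
      |P i y - Pt i y| ≤ 8 * h i *
        (2 ^ (-(i : ℤ)) * lam 1 * |dtF 1 - dF 1|
          + 2 ^ ((i : ℤ) - (n : ℤ)) * mu (n - 2) * |dtF n - dF n|) := by
  intro i hi hin y hy
  have hpos : ∀ j, 1 ≤ j → j < n → 0 < h j := fun j h1 h2 => by
    rw [hh]; linarith [hx j h1 h2]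
  have hlm : ∀ j, 1 ≤ j → j ≤ n - 2 → 0 ≤ lam j ∧ 0 ≤ mu j ∧ lam j + mu j ≤ 1 := by
    intro j h1 h2
    have := hpos j h1 (by omega)
    have := hpos (j + 1) (by omega) (by omega)
    refine ⟨by rw [hlam]; positivity, by rw [hmu]; positivity, le_of_eq ?_⟩
    rw [hlam, hmu, ← add_div, add_comm, div_self (by positivity)]
  have hdecay := abs_le_decayProfile_of_tridiag (e := fun j => dtF j - dF j) (by omega) hlm
    (fun k h1 h2 => by linarith [hsys k h1 h2, hsyst k h1 h2])
  have hpow : (2 : ℝ) ^ ((i : ℤ) - n) = 2 ^ (-(n : ℤ)) * 2 ^ (i : ℤ) := by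
    rw [← zpow_add₀ two_ne_zero, neg_add_eq_sub]
  have hL := mul_nonneg (zpow_nonneg zero_le_two (-(i : ℤ))) (hlm 1 le_rfl (by omega)).1
  have hR := mul_nonneg (zpow_nonneg zero_le_two ((i : ℤ) - n)) (hlm (n - 2) (by omega) le_rfl).2.1
  have hhi := hpos i (by omega) (by omega)
  have hpiece : ∀ d : ℕ → ℝ, f i + d i * (y - x i) + ((m i - d i) / h i) * (y - x i) ^ 2
      + ((d (i + 1) + d i - 2 * m i) / (h i) ^ 2) * (y - x i) ^ 2 * (y - x (i + 1))
        = hermitePiece (x i) (x (i + 1)) (f i) (m i) (d i) (d (i + 1)) y := fun d => by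
    rw [hh]; rfl
  rw [abs_sub_comm, hP, hPt, hpiece, hpiece]
  calc _ ≤ h i / 4 * (|dtF i - dF i| + |dtF (i + 1) - dF (i + 1)|) :=
        (abs_hermitePiece_sub_le (hx i (by omega) (by omega)) hy).trans_eq (by rw [hh])
    _ ≤ h i / 4 * (decayProfile _ _ i + decayProfile _ _ (i + 1)) := by
        gcongr
        · exact hdecay i hi (by omega)
        · exact_mod_cast hdecay (i + 1) (by omega) (by omega)
    _ ≤ _ := by
        rw [decayProfile_add_decayProfile_add_one, hpow]
        rw [hpow] at hR
        nlinarith [mul_nonneg hhi.le (mul_nonneg hL (abs_nonneg (dtF 1 - dF 1))),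
          mul_nonneg hhi.le (mul_nonneg hR (abs_nonneg (dtF n - dF n)))]

/-- Proposition 1 of the paper: distance between the pieces of two cubic splines
interpolating the same data but with different endpoint derivative values. -/
theorem spline_pieces_distance_bound
    (n : ℕ) (hn : 5 ≤ n)
    (x f h m lam mu dF dtF : ℕ → ℝ)
    (hx : ∀ i, 1 ≤ i → i < n → x i < x (i + 1))
    (hh : ∀ i, h i = x (i + 1) - x i)
    (hm : ∀ i, m i = (f (i + 1) - f i) / h i)
    (hlam : ∀ i, lam i = h (i + 1) / (h i + h (i + 1)))
    (hmu : ∀ i, mu i = h i / (h i + h (i + 1)))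
    -- interior derivative values of both splines solve the tridiagonal system
    (hsys : ∀ i, 2 ≤ i → i ≤ n - 1 →
      lam (i - 1) * dF (i - 1) + 2 * dF i + mu (i - 1) * dF (i + 1)
        = 3 * (lam (i - 1) * m (i - 1) + mu (i - 1) * m i))
    (hsyst : ∀ i, 2 ≤ i → i ≤ n - 1 →
      lam (i - 1) * dtF (i - 1) + 2 * dtF i + mu (i - 1) * dtF (i + 1)
        = 3 * (lam (i - 1) * m (i - 1) + mu (i - 1) * m i))
    -- the pieces of the two splines, in cubic Hermite form
    (P Pt : ℕ → ℝ → ℝ)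
    (hP : ∀ i y, P i y = f i + dF i * (y - x i) + ((m i - dF i) / h i) * (y - x i) ^ 2
        + ((dF (i + 1) + dF i - 2 * m i) / (h i) ^ 2) * (y - x i) ^ 2 * (y - x (i + 1)))
    (hPt : ∀ i y, Pt i y = f i + dtF i * (y - x i) + ((m i - dtF i) / h i) * (y - x i) ^ 2
        + ((dtF (i + 1) + dtF i - 2 * m i) / (h i) ^ 2) * (y - x i) ^ 2 * (y - x (i + 1))) :
    ∀ i, 2 ≤ i → i ≤ n - 2 → ∀ y ∈ Set.Icc (x i) (x (i + 1)),
      |P i y - Pt i y| ≤ 8 * h i *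
        (2 ^ (-(i : ℤ)) * lam 1 * |dtF 1 - dF 1|
          + 2 ^ ((i : ℤ) - (n : ℤ)) * mu (n - 2) * |dtF n - dF n|) :=
  spline_pieces_distance_bound_general n x f h m lam mu dF dtF hx hh hlam hmu hsys hsyst P Pt hP hPt
end

section
/- If P is a cubic polynomial with P(x_i) = f_i, P(x_{i+1}) = f_{i+1}, P'(x_i) = ḟ_i, P'(x_{i+1}) = ḟ_{i+1}, and f_i ≤ P(x_i + h_i/2) ≤ f_{i+1}, then ḟ_{i+1} − 4m_i ≤ ḟ_i ≤ ḟ_{i+1} + 4m_i, where m_i = (f_{i+1} − f_i)/h_i and h_i = x_{i+1} − x_i > 0. -/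
/-- If a cubic polynomial with Hermite data has midpoint value between `f_i` and
`f_{i+1}`, then `ḟ_{i+1} - 4m_i ≤ ḟ_i ≤ ḟ_{i+1} + 4m_i`. -/
theorem midpoint_between_implies_derivative_bounds
    (xi xip fi fip dfi dfip h m : ℝ)
    (hx : xi < xip)
    (hh : h = xip - xi)
    (hm : m = (fip - fi) / h)
    (hf : fi ≤ fip)
    (P : ℝ → ℝ)
    (hP : ∀ y, P y = fi + dfi * (y - xi) + ((m - dfi) / h) * (y - xi) ^ 2
        + ((dfip + dfi - 2 * m) / h ^ 2) * (y - xi) ^ 2 * (y - xip))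
    (hmid : fi ≤ P (xi + h / 2) ∧ P (xi + h / 2) ≤ fip) :
    dfip - 4 * m ≤ dfi ∧ dfi ≤ dfip + 4 * m := by
  have hpos : 0 < h := by rw [hh]; linarith
  have hne : h ≠ 0 := ne_of_gt hpos
  obtain ⟨h1, h2⟩ := hmid
  rw [hP] at h1 h2
  have hxip : xi + h / 2 - xip = -(h/2) := by rw [hh]; ring
  have hmh : m * h = fip - fi := by rw [hm]; field_simp
  have key : P (xi + h/2) = P (xi + h/2) := rfl
  have e1 : fi + dfi * (xi + h / 2 - xi) + ((m - dfi) / h) * (xi + h / 2 - xi) ^ 2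
        + ((dfip + dfi - 2 * m) / h ^ 2) * (xi + h / 2 - xi) ^ 2 * (xi + h / 2 - xip)
      = fi + m * h / 2 + h * (dfi - dfip) / 8 := by
    rw [hxip]; field_simp; ring
  rw [e1, hmh] at h1 h2
  constructor <;> nlinarith [mul_pos hpos hpos]
end

section
/- If a cubic spline interpolating monotone non-decreasing data f_1 ≤ ⋯ ≤ f_n (with n odd) has all interior derivatives nonnegative and its first piece P_1 is monotone on [x_1, x_2], then the endpoint derivative satisfies 0 ≤ ḟ_1 ≤ ḟ_2 + 4m_1, where m_1 = (f_2 − f_1)/h_1. -/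
/-- For a cubic spline on monotone non-decreasing data with nonnegative interior
derivatives whose first piece is monotone on `[x_1, x_2]`, the endpoint derivative
satisfies `0 ≤ ḟ_1 ≤ ḟ_2 + 4 m_1`. -/
theorem endpoint_derivative_bound
    (n : ℕ) (hn : 5 ≤ n) (hodd : Odd n)
    (x f h m dF : ℕ → ℝ)
    (hx : ∀ i, 1 ≤ i → i < n → x i < x (i + 1))
    (hh : ∀ i, h i = x (i + 1) - x i)
    (hm : ∀ i, m i = (f (i + 1) - f i) / h i)
    (hfmono : ∀ i, 1 ≤ i → i < n → f i ≤ f (i + 1))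
    (hinterior : ∀ i, 2 ≤ i → i ≤ n - 1 → 0 ≤ dF i)
    (P1 : ℝ → ℝ)
    (hP1 : ∀ y, P1 y = f 1 + dF 1 * (y - x 1) + ((m 1 - dF 1) / h 1) * (y - x 1) ^ 2
        + ((dF 2 + dF 1 - 2 * m 1) / (h 1) ^ 2) * (y - x 1) ^ 2 * (y - x 2))
    (hmono : MonotoneOn P1 (Set.Icc (x 1) (x 2)) ∨ AntitoneOn P1 (Set.Icc (x 1) (x 2))) :
    0 ≤ dF 1 ∧ dF 1 ≤ dF 2 + 4 * m 1 := by
  have hpos : 0 < h 1 := by rw [hh]; linarith [hx 1 le_rfl (by omega)]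
  have hne : h 1 ≠ 0 := ne_of_gt hpos
  have hb : x 2 = x 1 + h 1 := by have := hh 1; linarith
  have hmh : m 1 * h 1 = f 2 - f 1 := by rw [hm]; field_simp
  have hf12 : f 1 ≤ f 2 := hfmono 1 le_rfl (by omega)
  have hm1 : 0 ≤ m 1 := by rw [hm]; exact div_nonneg (by linarith) hpos.le
  have hPa : P1 (x 1) = f 1 := by rw [hP1]; ring
  have hPb : P1 (x 2) = f 2 := by rw [hP1, hb, hm]; field_simp; ring
  have hmid : P1 (x 1 + h 1 / 2) = (f 1 + f 2) / 2 + (h 1 / 8) * (dF 1 - dF 2) := by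
    rw [hP1, hb, hm]; field_simp; ring
  have hmemA : x 1 ∈ Set.Icc (x 1) (x 2) := ⟨le_rfl, by rw [hb]; linarith⟩
  have hmemB : x 2 ∈ Set.Icc (x 1) (x 2) := ⟨by rw [hb]; linarith, le_rfl⟩
  have hmemM : x 1 + h 1 / 2 ∈ Set.Icc (x 1) (x 2) := ⟨by linarith, by rw [hb]; linarith⟩
  have hdF2 : 0 ≤ dF 2 := hinterior 2 le_rfl (by omega)
  rcases hmono with hmono | hanti
  · -- monotone case
    -- upper bound from midpoint
    have hub : P1 (x 1 + h 1 / 2) ≤ P1 (x 2) := hmono hmemM hmemB (by rw [hb]; linarith)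
    rw [hmid, hPb] at hub
    have hupper : dF 1 ≤ dF 2 + 4 * m 1 := by nlinarith
    -- lower bound via limit argument
    set g : ℝ → ℝ := fun t => dF 1 + (m 1 - dF 1) / h 1 * t
      + (dF 2 + dF 1 - 2 * m 1) / (h 1) ^ 2 * t * (t - h 1) with hg
    have hkey : ∀ t : ℝ, P1 (x 1 + t) = f 1 + t * g t := by
      intro t; rw [hP1, hb, hg]; ring
    have hgt : ∀ t ∈ Set.Ioc (0 : ℝ) (h 1), 0 ≤ g t := by
      intro t ht
      have hmem : x 1 + t ∈ Set.Icc (x 1) (x 2) := ⟨by linarith [ht.1], by rw [hb]; linarith [ht.2]⟩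
      have h2 : P1 (x 1) ≤ P1 (x 1 + t) := hmono hmemA hmem (by linarith [ht.1])
      rw [hPa, hkey] at h2
      nlinarith [ht.1]
    have hcont : Continuous g := by fun_prop
    have htend : Filter.Tendsto g (nhdsWithin 0 (Set.Ioi 0)) (nhds (g 0)) :=
      (hcont.tendsto 0).mono_left nhdsWithin_le_nhds
    have h0 : 0 ≤ g 0 := by
      refine ge_of_tendsto htend ?_
      filter_upwards [Ioc_mem_nhdsGT_of_mem (Set.mem_Ico.2 ⟨le_rfl, hpos⟩)] with t ht
        using hgt t ht
    have hg0 : g 0 = dF 1 := by simp [hg]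
    exact ⟨by rw [hg0] at h0; exact h0, hupper⟩
  · -- antitone case: P1 is constant
    have hf21 : f 2 ≤ f 1 := by
      have := hanti hmemA hmemB (by rw [hb]; linarith)
      rwa [hPa, hPb] at this
    have heq : f 1 = f 2 := le_antisymm hf12 hf21
    have hm0 : m 1 = 0 := by
      have : m 1 * h 1 = 0 := by rw [hmh]; linarith
      rcases mul_eq_zero.1 this with h' | h'
      · exact h'
      · exact absurd h' hne
    have h1 : P1 (x 1 + h 1 / 2) ≤ f 1 := by
      have := hanti hmemA hmemM (by linarith)
      rwa [hPa] at this
    have h2 : f 2 ≤ P1 (x 1 + h 1 / 2) := by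
      have := hanti hmemM hmemB (by rw [hb]; linarith)
      rwa [hPb] at this
    rw [hmid] at h1 h2
    have hle : dF 1 ≤ dF 2 := by nlinarith
    have hge : dF 2 ≤ dF 1 := by nlinarith
    exact ⟨by linarith, by linarith⟩
end

section
/- Assume the splines P (with clamped boundary conditions ḟ_1 = f′(x_1), ḟ_n = f′(x_n)) and P̃ (same interpolation data, arbitrary endpoint derivatives ḟ̃_1, ḟ̃_n) satisfy the distance bound |P_i(x) − P̃_i(x)| ≤ 8h_i(2^{−i}λ_1|ḟ̃_1 − ḟ_1| + 2^{i−n}μ_{n−2}|ḟ̃_n − ḟ_n|), and that |P_i(x) − f(x)| ≤ C ĥ⁴ on each [x_i, x_{i+1}], where ĥ = max h_i < 1. If p > 0 and i ∈ Ω := {i : −p log₂ ĥ < i < n + p log₂ ĥ}, then for all x ∈ [x_i, x_{i+1}], |P̃_i(x) − f(x)| ≤ C ĥ⁴ + 8 ĥ (|ḟ̃_1 − ḟ_1| + |ḟ̃_n − ḟ_n|) ĥ^p, i.e., the error is O(ĥ^{min(p+1,4)}) on intervals indexed by Ω. -/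
/-- Order of approximation away from the boundary: if the clamped spline `P` is a
fourth-order approximation of `f` and `P̃` differs from `P` only through the endpoint
derivative data, then on intervals whose index `i` lies in
`Ω = {i : -p log₂ ĥ < i < n + p log₂ ĥ}` the spline `P̃` approximates `f` with error
`O(ĥ^{min(p+1,4)})`. -/
theorem perturbed_spline_approximation_order
    (n i : ℕ) (hn : 5 ≤ n) (hi : 2 ≤ i ∧ i ≤ n - 2)
    (xi xip hstep hhat lam1 mun2 C p d1 dn : ℝ)
    (hxi : xi < xip) (hstep_def : hstep = xip - xi)
    (hstep_le : hstep ≤ hhat) (hhat_pos : 0 < hhat) (hhat_lt : hhat < 1)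
    (hlam1 : 0 ≤ lam1 ∧ lam1 ≤ 1) (hmun2 : 0 ≤ mun2 ∧ mun2 ≤ 1)
    (hC : 0 < C) (hp : 0 < p)
    (hd1 : 0 ≤ d1) (hdn : 0 ≤ dn)
    (P Pt ffun : ℝ → ℝ)
    -- distance bound between the two spline pieces (Proposition 1)
    (hdist : ∀ y ∈ Set.Icc xi xip,
      |P y - Pt y| ≤ 8 * hstep * (2 ^ (-(i : ℤ)) * lam1 * d1 + 2 ^ ((i : ℤ) - (n : ℤ)) * mun2 * dn))
    -- fourth-order accuracy of the clamped spline
    (hacc : ∀ y ∈ Set.Icc xi xip, |P y - ffun y| ≤ C * hhat ^ 4)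
    -- membership of the index in Ω
    (hOmega : -p * Real.logb 2 hhat < (i : ℝ) ∧ (i : ℝ) < (n : ℝ) + p * Real.logb 2 hhat) :
    ∀ y ∈ Set.Icc xi xip,
      |Pt y - ffun y| ≤ C * hhat ^ 4 + 8 * hhat * (d1 + dn) * hhat ^ p := by
  have hb : (2:ℝ) ^ (Real.logb 2 hhat) = hhat :=
    Real.rpow_logb (by norm_num) (by norm_num) hhat_pos
  have hkey : ∀ z : ℤ, (z : ℝ) < p * Real.logb 2 hhat → (2:ℝ) ^ z < hhat ^ p := by
    intro z hz
    have h1 : (2:ℝ) ^ (z : ℝ) < (2:ℝ) ^ (p * Real.logb 2 hhat) :=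
      Real.rpow_lt_rpow_of_exponent_lt one_lt_two hz
    have h2 : (2:ℝ) ^ (p * Real.logb 2 hhat) = hhat ^ p := by
      rw [mul_comm, Real.rpow_mul (by norm_num), hb]
    rw [← Real.rpow_intCast (2:ℝ) z]
    linarith [h1, h2.symm ▸ h1]
  have e1 : (2:ℝ) ^ (-(i:ℤ)) < hhat ^ p := by
    apply hkey; push_cast; linarith [hOmega.1]
  have e2 : (2:ℝ) ^ ((i:ℤ) - (n:ℤ)) < hhat ^ p := by
    apply hkey; push_cast; linarith [hOmega.2]
  have hpow_nonneg : (0:ℝ) ≤ hhat ^ p := Real.rpow_nonneg hhat_pos.le p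
  have hstep_pos : 0 < hstep := by rw [hstep_def]; linarith
  have z1 : (0:ℝ) < 2 ^ (-(i:ℤ)) := by positivity
  have z2 : (0:ℝ) < 2 ^ ((i:ℤ) - (n:ℤ)) := by positivity
  intro y hy
  have h1 := hdist y hy
  have h2 := hacc y hy
  have hterm : 8 * hstep * (2 ^ (-(i : ℤ)) * lam1 * d1 + 2 ^ ((i : ℤ) - (n : ℤ)) * mun2 * dn)
      ≤ 8 * hhat * (d1 + dn) * hhat ^ p := by
    have t1 : 2 ^ (-(i : ℤ)) * lam1 * d1 ≤ hhat ^ p * d1 := by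
      have : 2 ^ (-(i : ℤ)) * lam1 ≤ hhat ^ p := by
        calc (2:ℝ) ^ (-(i : ℤ)) * lam1 ≤ 2 ^ (-(i : ℤ)) * 1 := by
              exact mul_le_mul_of_nonneg_left hlam1.2 z1.le
          _ ≤ hhat ^ p := by linarith
      exact mul_le_mul_of_nonneg_right this hd1
    have t2 : 2 ^ ((i : ℤ) - (n : ℤ)) * mun2 * dn ≤ hhat ^ p * dn := by
      have : 2 ^ ((i : ℤ) - (n : ℤ)) * mun2 ≤ hhat ^ p := by
        calc (2:ℝ) ^ ((i : ℤ) - (n : ℤ)) * mun2 ≤ 2 ^ ((i : ℤ) - (n : ℤ)) * 1 := by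
              exact mul_le_mul_of_nonneg_left hmun2.2 z2.le
          _ ≤ hhat ^ p := by linarith
      exact mul_le_mul_of_nonneg_right this hdn
    have hs : 8 * hstep * (2 ^ (-(i : ℤ)) * lam1 * d1 + 2 ^ ((i : ℤ) - (n : ℤ)) * mun2 * dn)
        ≤ 8 * hhat * (hhat ^ p * d1 + hhat ^ p * dn) := by
      apply mul_le_mul (by linarith) (by linarith)
      · have a1 := mul_nonneg (mul_nonneg z1.le hlam1.1) hd1
        have a2 := mul_nonneg (mul_nonneg z2.le hmun2.1) hdn
        linarith
      · positivity
    calc 8 * hstep * (2 ^ (-(i : ℤ)) * lam1 * d1 + 2 ^ ((i : ℤ) - (n : ℤ)) * mun2 * dn)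
        ≤ 8 * hhat * (hhat ^ p * d1 + hhat ^ p * dn) := hs
      _ = 8 * hhat * (d1 + dn) * hhat ^ p := by ring
  calc |Pt y - ffun y| ≤ |P y - Pt y| + |P y - ffun y| := by
        have := abs_sub (P y - Pt y) (P y - ffun y)
        calc |Pt y - ffun y| = |(P y - ffun y) - (P y - Pt y)| := by ring_nf
          _ ≤ |P y - ffun y| + |P y - Pt y| := abs_sub _ _
          _ = |P y - Pt y| + |P y - ffun y| := by ring
    _ ≤ C * hhat ^ 4 + 8 * hhat * (d1 + dn) * hhat ^ p := by linarith [hterm]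
end
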